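/- arXiv:1911.03715 — 3 statements merged into one kernel-verified Lean document; each statement's English description precedes it below -/
import Mathlib

section
/- Let A and B be m×m complex idempotent matrices (A² = A, B² = B) and let k ≥ 1 be an integer. Then rank(rowBlock((A·B)^k, (B·A)^k)) = rank(rowBlock(A, B)) + rank((A·B)^k) + rank((B·A)^k) − rank(A) − rank(B). -/
/-! By Grassmann's formula, `rank [X, Y] = rank X + rank Y - dim (range X ⊓ range Y)`. Applied to
`X, Y = (AB)^k, (BA)^k` and to `X, Y = A, B`, the claim reduces to the equality of the two
intersections of ranges, which holds because both consist of the common fixed vectors of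
the projections `A` and `B`. -/

open Matrix

namespace Module.End

variable {R M : Type*} [Semiring R] [AddCommMonoid M] [Module R M]

theorem range_pow_mul_le_range_left (f g : Module.End R M) {k : ℕ} (hk : k ≠ 0) :
    LinearMap.range ((f * g) ^ k) ≤ LinearMap.range f := by
  obtain ⟨j, rfl⟩ := Nat.exists_eq_succ_of_ne_zero hk
  rw [pow_succ', mul_assoc, mul_eq_comp]
  exact LinearMap.range_comp_le_range _ _

theorem mem_range_pow_of_apply_eq_self {f : Module.End R M} {x : M} (hx : f x = x) (k : ℕ) :
    x ∈ LinearMap.range (f ^ k) :=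
  ⟨x, by rw [pow_apply]; exact Function.IsFixedPt.iterate hx k⟩

theorem range_pow_mul_inf_range_pow_mul {f g : Module.End R M} (hf : IsIdempotentElem f)
    (hg : IsIdempotentElem g) {k : ℕ} (hk : k ≠ 0) :
    LinearMap.range ((f * g) ^ k) ⊓ LinearMap.range ((g * f) ^ k) =
      LinearMap.range f ⊓ LinearMap.range g := by
  refine le_antisymm (inf_le_inf (range_pow_mul_le_range_left f g hk)
    (range_pow_mul_le_range_left g f hk)) ?_
  intro x hx
  obtain ⟨hxf, hxg⟩ := Submodule.mem_inf.mp hx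
  rw [LinearMap.IsIdempotentElem.mem_range_iff hf] at hxf
  rw [LinearMap.IsIdempotentElem.mem_range_iff hg] at hxg
  exact ⟨mem_range_pow_of_apply_eq_self (by rw [mul_apply, hxg, hxf]) k,
    mem_range_pow_of_apply_eq_self (by rw [mul_apply, hxf, hxg]) k⟩

end Module.End

namespace Matrix

theorem range_mulVecLin_fromCols {R m n p : Type*} [CommSemiring R] [Fintype n] [Fintype p]
    (X : Matrix m n R) (Y : Matrix m p R) :
    LinearMap.range (fromCols X Y).mulVecLin =
      LinearMap.range X.mulVecLin ⊔ LinearMap.range Y.mulVecLin := by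
  have hcomp : (fromCols X Y).mulVecLin = (X.mulVecLin.coprod Y.mulVecLin) ∘ₗ
      (LinearEquiv.sumArrowLequivProdArrow n p R R).toLinearMap := by
    ext v
    simp only [mulVecLin_apply, fromCols_mulVec, LinearMap.comp_apply, LinearMap.coprod_apply,
      LinearEquiv.coe_coe]
    rfl
  rw [hcomp, LinearMap.range_comp_of_range_eq_top _ (LinearEquiv.range _), LinearMap.range_coprod]

theorem rank_fromCols_add_finrank_inf {K m n p : Type*} [Field K] [Fintype m] [Fintype n]
    [Fintype p] (X : Matrix m n K) (Y : Matrix m p K) :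
    (fromCols X Y).rank +
        Module.finrank K ↥(LinearMap.range X.mulVecLin ⊓ LinearMap.range Y.mulVecLin) =
      X.rank + Y.rank := by
  rw [rank, range_mulVecLin_fromCols]
  exact Submodule.finrank_sup_add_finrank_inf_eq _ _

theorem range_mulVecLin_pow_mul_inf {R n : Type*} [CommSemiring R] [Fintype n] [DecidableEq n]
    {A B : Matrix n n R} (hA : IsIdempotentElem A) (hB : IsIdempotentElem B) {k : ℕ}
    (hk : k ≠ 0) :
    LinearMap.range ((A * B) ^ k).mulVecLin ⊓ LinearMap.range ((B * A) ^ k).mulVecLin =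
      LinearMap.range A.mulVecLin ⊓ LinearMap.range B.mulVecLin := by
  have hcoe (M : Matrix n n R) : toLinAlgEquiv' M = M.mulVecLin := rfl
  simp only [← hcoe, map_mul, map_pow]
  exact Module.End.range_pow_mul_inf_range_pow_mul (hA.map toLinAlgEquiv')
    (hB.map toLinAlgEquiv') hk

end Matrix

/-- For idempotent `A`, `B` and `k ≥ 1`:
`rank [(AB)^k, (BA)^k] = rank [A, B] + rank (AB)^k + rank (BA)^k - rank A - rank B`. -/
theorem stmt_3 (m : ℕ) (A B : Matrix (Fin m) (Fin m) ℂ)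
    (hA : A * A = A) (hB : B * B = B) (k : ℕ) (hk : 1 ≤ k) :
    ((Matrix.fromCols ((A * B) ^ k) ((B * A) ^ k)).rank : ℤ) =
      ((Matrix.fromCols A B).rank : ℤ) + (((A * B) ^ k).rank : ℤ)
        + (((B * A) ^ k).rank : ℤ) - (A.rank : ℤ) - (B.rank : ℤ) := by
  have hPow := rank_fromCols_add_finrank_inf ((A * B) ^ k) ((B * A) ^ k)
  have hId := rank_fromCols_add_finrank_inf A B
  rw [range_mulVecLin_pow_mul_inf hA hB (by omega)] at hPow
  omega
end

section
/- Let A and B be m×m complex idempotent matrices (A² = A, B² = B) and let k ≥ 1 be an integer. Then rank((A·B)^k − (B·A)^k) = rank(colBlock(A, B)) + rank(rowBlock(A, B)) + rank((A·B)^k) + rank((B·A)^k) − 2·rank(A) − 2·rank(B). -/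
/-!
Write `T = (AB)^k`, `S = (BA)^k` and count dimensions of kernels. If `Tx = Sx`, then `Tx` lies
in `ran A ∩ ran B`, where `T` and `S` act as the identity, and `x - Tx` lies in `ker T ∩ ker S`;
so `ker (T - S) = (ran A ∩ ran B) ⊕ (ker T ∩ ker S)`. The space `ker T ∩ ker S` is `B`-stable,
hence splits into `ker S ∩ ker B` and `ker T ∩ ran B`, and `A` maps `ker S ∩ ker B` onto
`ker S ∩ ran A` with kernel `ker A ∩ ker B`: it is onto because `AB` is nilpotent on
`ker S ∩ ran A`, so `1 - AB` is invertible there. Finally `ker T = ker B ⊕ (ker T ∩ ran B)` and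
`ker S = ker A ⊕ (ker S ∩ ran A)`; rank–nullity turns these splittings into the formula.
-/

open Module LinearMap Submodule

theorem Submodule.finrank_map_add_finrank_inf_ker {K V W : Type*} [DivisionRing K]
    [AddCommGroup V] [Module K V] [AddCommGroup W] [Module K W] [FiniteDimensional K V]
    (f : V →ₗ[K] W) (U : Submodule K V) :
    finrank K (U.map f) + finrank K ↥(U ⊓ ker f) = finrank K U := by
  rw [← range_domRestrict, ← (f.domRestrict U).finrank_range_add_finrank_ker, ker_domRestrict,
    ← map_comap_subtype, finrank_map_subtype_eq]

theorem IsIdempotentElem.map_eq_inf_range {R M : Type*} [Ring R] [AddCommGroup M] [Module R M]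
    {p : M →ₗ[R] M} (hp : IsIdempotentElem p) {U : Submodule R M} (hU : ∀ x ∈ U, p x ∈ U) :
    U.map p = U ⊓ range p := by
  refine le_antisymm (map_le_iff_le_comap.mpr fun x hx => ⟨hU x hx, mem_range_self p x⟩) ?_
  rintro x ⟨hxU, hxp⟩
  exact ⟨x, hxU, hp.mem_range_iff.mp hxp⟩

section Monoid

variable {M : Type*} [Monoid M] {a b : M} {k : ℕ}

theorem IsIdempotentElem.mul_pow_mul_self (hb : IsIdempotentElem b) (hk : k ≠ 0) :
    (a * b) ^ k * b = (a * b) ^ k := by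
  obtain ⟨n, rfl⟩ := Nat.exists_eq_succ_of_ne_zero hk
  rw [pow_succ, mul_assoc, mul_assoc, hb.eq]

theorem IsIdempotentElem.mul_mul_pow_self (ha : IsIdempotentElem a) (hk : k ≠ 0) :
    a * (a * b) ^ k = (a * b) ^ k := by
  obtain ⟨n, rfl⟩ := Nat.exists_eq_succ_of_ne_zero hk
  rw [pow_succ', ← mul_assoc, ← mul_assoc, ha.eq]

end Monoid

namespace Module.End

section Ring

variable {R M : Type*} [Ring R] [AddCommGroup M] [Module R M]

theorem pow_apply_eq_self {f : End R M} {x : M} (hx : f x = x) (j : ℕ) : (f ^ j) x = x := by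
  rw [coe_pow]
  exact Function.IsFixedPt.iterate hx j

theorem exists_sub_apply_eq_of_pow_apply_eq_zero {f : End R M} {X : Submodule R M}
    (hX : ∀ x ∈ X, f x ∈ X) (j : ℕ) {v : M} (hv : v ∈ X) (hfv : (f ^ j) v = 0) :
    ∃ x ∈ X, x - f x = v := by
  induction j generalizing v with
  | zero => exact ⟨0, X.zero_mem, by simp_all⟩
  | succ j ih =>
    obtain ⟨x, hxX, hx⟩ := ih (hX v hv) (by rwa [← mul_apply, ← pow_succ])
    exact ⟨v + x, X.add_mem hv hxX, by rw [map_add, ← hx]; abel⟩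

variable {a b : End R M} {k : ℕ}

theorem ker_le_ker_pow_mul (hb : IsIdempotentElem b) (hk : k ≠ 0) :
    ker b ≤ ker ((a * b) ^ k) := fun x hx => by
  rw [mem_ker, ← hb.mul_pow_mul_self hk, mul_apply, mem_ker.mp hx, map_zero]

theorem ker_pow_mul_inf_range_le (hb : IsIdempotentElem b) :
    ker ((a * b) ^ k) ⊓ range b ≤ ker ((b * a) ^ k) := by
  rintro x ⟨hx, hxb⟩
  rw [mem_ker, ← hb.mem_range_iff.mp hxb, ← mul_apply, mul_pow_mul, mul_apply, mem_ker.mp hx,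
    map_zero]

theorem map_pow_mul_ker_sub (ha : IsIdempotentElem a) (hb : IsIdempotentElem b) (hk : k ≠ 0) :
    (ker ((a * b) ^ k - (b * a) ^ k)).map ((a * b) ^ k) = range a ⊓ range b := by
  refine le_antisymm (map_le_iff_le_comap.mpr fun x hx => mem_inf.mpr ⟨?_, ?_⟩) ?_
  · rw [← ha.mul_mul_pow_self hk, mul_apply]
    exact mem_range_self a _
  · rw [sub_eq_zero.mp (mem_ker.mp hx), ← hb.mul_mul_pow_self hk, mul_apply]
    exact mem_range_self b _
  rintro y ⟨hya, hyb⟩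
  have hPy : (a * b) y = y := by rw [mul_apply, hb.mem_range_iff.mp hyb, ha.mem_range_iff.mp hya]
  have hQy : (b * a) y = y := by rw [mul_apply, ha.mem_range_iff.mp hya, hb.mem_range_iff.mp hyb]
  refine ⟨y, mem_ker.mpr ?_, pow_apply_eq_self hPy k⟩
  rw [LinearMap.sub_apply, pow_apply_eq_self hPy, pow_apply_eq_self hQy, sub_self]

theorem map_ker_pow_mul_inf_ker (ha : IsIdempotentElem a) (hb : IsIdempotentElem b)
    (hk : k ≠ 0) : (ker ((b * a) ^ k) ⊓ ker b).map a = ker ((b * a) ^ k) ⊓ range a := by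
  have hSa : (b * a) ^ k * a = (b * a) ^ k := ha.mul_pow_mul_self hk
  refine le_antisymm
    (map_le_iff_le_comap.mpr fun y hy => mem_inf.mpr ⟨?_, mem_range_self a y⟩) ?_
  · rw [mem_ker, ← mul_apply, hSa]
    exact hy.1
  set X := ker ((b * a) ^ k) ⊓ range a
  have hXT : X ≤ ker ((a * b) ^ k) := ker_pow_mul_inf_range_le ha
  have hX : ∀ x ∈ X, (a * b) x ∈ X := by
    intro x hx
    refine mem_inf.mpr ⟨?_, by rw [mul_apply]; exact mem_range_self a _⟩
    rw [mem_ker, ← mul_apply, ← mul_assoc, hSa, mul_pow_mul, mul_apply, mem_ker.mp (hXT hx),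
      map_zero]
  intro v hv
  obtain ⟨x, hxX, hx⟩ := exists_sub_apply_eq_of_pow_apply_eq_zero hX k hv (hXT hv)
  refine ⟨x - b x, mem_inf.mpr ⟨?_, ?_⟩, ?_⟩
  · rw [mem_ker, map_sub, ← mul_apply _ b, mul_pow_mul, mul_apply, mem_ker.mp (hXT hxX),
      mem_ker.mp hxX.1, map_zero, sub_zero]
  · rw [mem_ker, map_sub, ← mul_apply b b, hb.eq, sub_self]
  · rw [map_sub, ← hx, ha.mem_range_iff.mp hxX.2, mul_apply]

end Ring

section DivisionRing

variable {K V : Type*} [DivisionRing K] [AddCommGroup V] [Module K V] [FiniteDimensional K V]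
  {a b : End K V} {k : ℕ}

theorem finrank_ker_pow_mul_eq (hb : IsIdempotentElem b) (hk : k ≠ 0) :
    finrank K (ker ((a * b) ^ k)) =
      finrank K ↥(ker ((a * b) ^ k) ⊓ range b) + finrank K (ker b) := by
  have hinv : ∀ x ∈ ker ((a * b) ^ k), b x ∈ ker ((a * b) ^ k) := fun x hx => by
    rwa [mem_ker, ← mul_apply, hb.mul_pow_mul_self hk]
  rw [← finrank_map_add_finrank_inf_ker b, hb.map_eq_inf_range hinv,
    inf_eq_right.mpr (ker_le_ker_pow_mul hb hk)]

theorem finrank_ker_pow_mul_sub_eq (ha : IsIdempotentElem a) (hb : IsIdempotentElem b)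
    (hk : k ≠ 0) :
    finrank K (ker ((a * b) ^ k - (b * a) ^ k)) =
      finrank K ↥(range a ⊓ range b) + finrank K ↥(ker ((a * b) ^ k) ⊓ ker ((b * a) ^ k)) := by
  have hker : ker ((a * b) ^ k - (b * a) ^ k) ⊓ ker ((a * b) ^ k) =
      ker ((a * b) ^ k) ⊓ ker ((b * a) ^ k) := by
    ext x
    simp only [mem_inf, mem_ker, LinearMap.sub_apply]
    constructor <;> rintro ⟨h, h'⟩ <;> simp_all
  rw [← finrank_map_add_finrank_inf_ker ((a * b) ^ k), map_pow_mul_ker_sub ha hb hk, hker]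

theorem finrank_ker_pow_mul_inf_ker_pow_mul_eq (hb : IsIdempotentElem b) (hk : k ≠ 0) :
    finrank K ↥(ker ((a * b) ^ k) ⊓ ker ((b * a) ^ k)) =
      finrank K ↥(ker ((a * b) ^ k) ⊓ range b) + finrank K ↥(ker ((b * a) ^ k) ⊓ ker b) := by
  have hinv : ∀ x ∈ ker ((a * b) ^ k) ⊓ ker ((b * a) ^ k),
      b x ∈ ker ((a * b) ^ k) ⊓ ker ((b * a) ^ k) := fun x hx => by
    refine mem_inf.mpr ⟨?_, ?_⟩
    · rw [mem_ker, ← mul_apply, hb.mul_pow_mul_self hk]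
      exact hx.1
    · rw [mem_ker, ← mul_apply, mul_pow_mul, mul_apply, mem_ker.mp hx.1, map_zero]
  have hrange : ker ((a * b) ^ k) ⊓ ker ((b * a) ^ k) ⊓ range b = ker ((a * b) ^ k) ⊓ range b :=
    le_antisymm (inf_le_inf_right _ inf_le_left)
      (le_inf (le_inf inf_le_left (ker_pow_mul_inf_range_le hb)) inf_le_right)
  rw [← finrank_map_add_finrank_inf_ker b, hb.map_eq_inf_range hinv, hrange, inf_assoc,
    inf_eq_right.mpr (inf_le_right.trans (ker_le_ker_pow_mul hb hk))]

theorem finrank_ker_pow_mul_inf_ker_eq (ha : IsIdempotentElem a) (hb : IsIdempotentElem b)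
    (hk : k ≠ 0) :
    finrank K ↥(ker ((b * a) ^ k) ⊓ ker b) =
      finrank K ↥(ker ((b * a) ^ k) ⊓ range a) + finrank K ↥(ker a ⊓ ker b) := by
  rw [← finrank_map_add_finrank_inf_ker a, map_ker_pow_mul_inf_ker ha hb hk, inf_right_comm,
    inf_eq_right.mpr (ker_le_ker_pow_mul ha hk)]

theorem finrank_ker_pow_mul_sub (ha : IsIdempotentElem a) (hb : IsIdempotentElem b)
    (hk : k ≠ 0) :
    finrank K (ker ((a * b) ^ k - (b * a) ^ k)) + finrank K (ker a) + finrank K (ker b) =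
      finrank K ↥(range a ⊓ range b) + finrank K ↥(ker a ⊓ ker b)
        + finrank K (ker ((a * b) ^ k)) + finrank K (ker ((b * a) ^ k)) := by
  have h₁ := finrank_ker_pow_mul_sub_eq ha hb hk
  have h₂ := finrank_ker_pow_mul_inf_ker_pow_mul_eq (a := a) hb hk
  have h₃ := finrank_ker_pow_mul_inf_ker_eq ha hb hk
  have h₄ := finrank_ker_pow_mul_eq (a := a) hb hk
  have h₅ := finrank_ker_pow_mul_eq (a := b) ha hk
  omega

end DivisionRing

end Module.End

namespace Matrix

variable {R : Type*} [CommRing R] {m₁ m₂ n₁ n₂ : Type*} [Fintype n₁] [Fintype n₂]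

theorem ker_mulVecLin_fromRows (A₁ : Matrix m₁ n₁ R) (A₂ : Matrix m₂ n₁ R) :
    ker (fromRows A₁ A₂).mulVecLin = ker A₁.mulVecLin ⊓ ker A₂.mulVecLin := by
  ext x
  rw [mem_ker, mem_inf, mem_ker, mem_ker, mulVecLin_apply, fromRows_mulVec, ← Sum.elim_zero_zero]
  exact Sum.elim_eq_iff

theorem range_mulVecLin_fromCols_s5 (A₁ : Matrix m₁ n₁ R) (A₂ : Matrix m₁ n₂ R) :
    range (fromCols A₁ A₂).mulVecLin = range A₁.mulVecLin ⊔ range A₂.mulVecLin := by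
  refine le_antisymm ?_ (sup_le ?_ ?_)
  · rintro _ ⟨v, rfl⟩
    rw [mulVecLin_apply, fromCols_mulVec]
    exact add_mem_sup (mem_range_self _ _) (mem_range_self _ _)
  · rintro _ ⟨v, rfl⟩
    exact ⟨Sum.elim v 0, by simp⟩
  · rintro _ ⟨v, rfl⟩
    exact ⟨Sum.elim 0 v, by simp⟩

theorem rank_add_finrank_ker_mulVecLin {K : Type*} [Field K] (A : Matrix m₁ n₁ K) :
    A.rank + finrank K (ker A.mulVecLin) = Fintype.card n₁ :=
  A.mulVecLin.finrank_range_add_finrank_ker.trans (finrank_pi K)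

theorem rank_pow_mul_sub_pow {n K : Type*} [Fintype n] [DecidableEq n] [Field K]
    {A B : Matrix n n K} (hA : IsIdempotentElem A) (hB : IsIdempotentElem B) {k : ℕ}
    (hk : k ≠ 0) :
    (((A * B) ^ k - (B * A) ^ k).rank : ℤ) =
      (fromRows A B).rank + (fromCols A B).rank + ((A * B) ^ k).rank + ((B * A) ^ k).rank
        - 2 * A.rank - 2 * B.rank := by
  have key : finrank K (ker ((A * B) ^ k - (B * A) ^ k).mulVecLin) + finrank K (ker A.mulVecLin)
      + finrank K (ker B.mulVecLin) =
      finrank K ↥(range A.mulVecLin ⊓ range B.mulVecLin)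
        + finrank K ↥(ker A.mulVecLin ⊓ ker B.mulVecLin)
        + finrank K (ker ((A * B) ^ k).mulVecLin) + finrank K (ker ((B * A) ^ k).mulVecLin) := by
    have h := End.finrank_ker_pow_mul_sub (hA.map toLinAlgEquiv') (hB.map toLinAlgEquiv') hk
    rwa [← map_mul, ← map_mul, ← map_pow, ← map_pow, ← map_sub] at h
  have hCols := finrank_sup_add_finrank_inf_eq (range A.mulVecLin) (range B.mulVecLin)
  rw [← range_mulVecLin_fromCols_s5] at hCols
  have hRows := rank_add_finrank_ker_mulVecLin (fromRows A B)
  rw [ker_mulVecLin_fromRows] at hRows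
  have hSub := rank_add_finrank_ker_mulVecLin ((A * B) ^ k - (B * A) ^ k)
  have hT := rank_add_finrank_ker_mulVecLin ((A * B) ^ k)
  have hS := rank_add_finrank_ker_mulVecLin ((B * A) ^ k)
  have hA' := rank_add_finrank_ker_mulVecLin A
  have hB' := rank_add_finrank_ker_mulVecLin B
  unfold rank at *
  omega

end Matrix

/-- For idempotent `A`, `B` and `k ≥ 1`:
`rank ((AB)^k - (BA)^k) = rank [A; B] + rank [A, B] + rank (AB)^k + rank (BA)^k
  - 2 rank A - 2 rank B`. -/
theorem stmt_5 (m : ℕ) (A B : Matrix (Fin m) (Fin m) ℂ)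
    (hA : A * A = A) (hB : B * B = B) (k : ℕ) (hk : 1 ≤ k) :
    (((A * B) ^ k - (B * A) ^ k).rank : ℤ) =
      ((Matrix.fromRows A B).rank : ℤ) + ((Matrix.fromCols A B).rank : ℤ)
        + (((A * B) ^ k).rank : ℤ) + (((B * A) ^ k).rank : ℤ)
        - 2 * (A.rank : ℤ) - 2 * (B.rank : ℤ) :=
  Matrix.rank_pow_mul_sub_pow hA hB (Nat.one_le_iff_ne_zero.mp hk)
end

section
/- Let A and B be m×m complex idempotent matrices (A² = A, B² = B) and let k ≥ 1 be an integer. Then rank((A·B)^k·A − (B·A)^k·B) = rank(colBlock(A, B)) + rank(rowBlock(A, B)) + rank((A·B)^k·A) + rank((B·A)^k·B) − 2·rank(A) − 2·rank(B). -/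
/-!
Write `X = (AB)^k A` and `Y = (BA)^k B`. Both fix every vector of `range A ∩ range B`, while
`range X ⊆ range A` and `range Y ⊆ range B`; hence `range X ∩ range Y = range A ∩ range B`, and the
same holds for the transposes. If `X v = Y v`, then `w = X v` lies in `range A ∩ range B`, so
`v - w ∈ ker X ∩ ker Y`: thus `ker (X - Y) = (ker X ∩ ker Y) ⊕ (range A ∩ range B)`. The formula
follows from rank–nullity together with
`rank [M, N] = rank M + rank N - dim (range M ∩ range N)` and
`rank [M; N] = rank M + rank N - dim (range Mᵀ ∩ range Nᵀ)`, applied to `(A, B)` and `(X, Y)`.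
-/

open Matrix LinearMap Module

lemma IsIdempotentElem.mul_mul_pow_mul {M : Type*} [Monoid M] {a : M} (ha : IsIdempotentElem a)
    (b : M) (k : ℕ) : a * ((a * b) ^ k * a) = (a * b) ^ k * a := by
  rw [mul_pow_mul, ← mul_assoc, ha.eq]

namespace Module.End

variable {R V : Type*} [Ring R] [AddCommGroup V] [Module R V] {p q : Module.End R V}

lemma mul_pow_mul_apply_of_mem_range_inf (hp : IsIdempotentElem p) (hq : IsIdempotentElem q)
    (k : ℕ) {v : V} (hv : v ∈ range p ⊓ range q) : ((p * q) ^ k * p) v = v := by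
  have hpv : p v = v := (LinearMap.IsIdempotentElem.mem_range_iff hp).1 hv.1
  have hqv : q v = v := (LinearMap.IsIdempotentElem.mem_range_iff hq).1 hv.2
  have hpqv : (p * q) v = v := by rw [mul_apply, hqv, hpv]
  rw [mul_apply, hpv, pow_apply, Function.iterate_fixed hpqv]

lemma range_mul_pow_mul_le (hp : IsIdempotentElem p) (q : Module.End R V) (k : ℕ) :
    range ((p * q) ^ k * p) ≤ range p := by
  rw [← hp.mul_mul_pow_mul q k, mul_eq_comp]
  exact range_comp_le_range _ _

lemma range_mul_pow_mul_inf (hp : IsIdempotentElem p) (hq : IsIdempotentElem q) (k : ℕ) :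
    range ((p * q) ^ k * p) ⊓ range ((q * p) ^ k * q) = range p ⊓ range q := by
  refine le_antisymm (inf_le_inf (range_mul_pow_mul_le hp q k) (range_mul_pow_mul_le hq p k)) ?_
  intro v hv
  exact ⟨⟨v, mul_pow_mul_apply_of_mem_range_inf hp hq k hv⟩,
    ⟨v, mul_pow_mul_apply_of_mem_range_inf hq hp k (inf_comm (range p) _ ▸ hv)⟩⟩

lemma disjoint_ker_mul_pow_mul_range_inf (hp : IsIdempotentElem p) (hq : IsIdempotentElem q)
    (k : ℕ) : Disjoint (ker ((p * q) ^ k * p)) (range p ⊓ range q) := by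
  rw [Submodule.disjoint_def]
  intro v hker hv
  rw [← mul_pow_mul_apply_of_mem_range_inf hp hq k hv]
  exact hker

lemma ker_mul_pow_mul_sub (hp : IsIdempotentElem p) (hq : IsIdempotentElem q) (k : ℕ) :
    ker ((p * q) ^ k * p - (q * p) ^ k * q) =
      ker ((p * q) ^ k * p) ⊓ ker ((q * p) ^ k * q) ⊔ (range p ⊓ range q) := by
  set X := (p * q) ^ k * p
  set Y := (q * p) ^ k * q
  have hfix : ∀ v ∈ range p ⊓ range q, X v = v ∧ Y v = v := fun v hv =>
    ⟨mul_pow_mul_apply_of_mem_range_inf hp hq k hv,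
      mul_pow_mul_apply_of_mem_range_inf hq hp k (inf_comm (range p) _ ▸ hv)⟩
  refine le_antisymm (fun v hv => ?_) (sup_le (fun v ⟨hX, hY⟩ => ?_) (fun v hv => ?_))
  · have hXY : X v = Y v := sub_eq_zero.1 hv
    have hw : X v ∈ range p ⊓ range q :=
      range_mul_pow_mul_inf hp hq k ▸ ⟨⟨v, rfl⟩, ⟨v, hXY.symm⟩⟩
    obtain ⟨hXw, hYw⟩ := hfix _ hw
    have hker : v - X v ∈ ker X ⊓ ker Y :=
      ⟨by simp [hXw], by simp [hYw, ← hXY]⟩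
    simpa only [sub_add_cancel] using Submodule.add_mem_sup hker hw
  · simp [mem_ker.1 hX, mem_ker.1 hY]
  · simp [hfix v hv]

lemma finrank_ker_mul_pow_mul_sub {K V : Type*} [DivisionRing K] [AddCommGroup V] [Module K V]
    [FiniteDimensional K V] {p q : Module.End K V}
    (hp : IsIdempotentElem p) (hq : IsIdempotentElem q) (k : ℕ) :
    finrank K (ker ((p * q) ^ k * p - (q * p) ^ k * q)) =
      finrank K ↥(ker ((p * q) ^ k * p) ⊓ ker ((q * p) ^ k * q)) +
        finrank K ↥(range p ⊓ range q) := by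
  have hdisj : Disjoint (ker ((p * q) ^ k * p) ⊓ ker ((q * p) ^ k * q)) (range p ⊓ range q) :=
    (disjoint_ker_mul_pow_mul_range_inf hp hq k).mono_left inf_le_left
  rw [ker_mul_pow_mul_sub hp hq k, ← Submodule.finrank_sup_add_finrank_inf_eq, hdisj.eq_bot,
    finrank_bot, add_zero]

end Module.End

namespace Matrix

variable {R K l m n n₁ n₂ : Type*} [CommSemiring R] [Field K] [Fintype n]

lemma range_mulVecLin_fromCols_s6 [Fintype n₁] [Fintype n₂] (M : Matrix m n₁ R) (N : Matrix m n₂ R) :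
    range (fromCols M N).mulVecLin = range M.mulVecLin ⊔ range N.mulVecLin := by
  rw [range_mulVecLin, range_mulVecLin, range_mulVecLin, ← Submodule.span_union,
    ← Set.Sum.elim_range]
  congr 2
  ext (j | j) i <;> rfl

lemma ker_mulVecLin_fromRows_s6 (M : Matrix m n R) (N : Matrix l n R) :
    ker (fromRows M N).mulVecLin = ker M.mulVecLin ⊓ ker N.mulVecLin := by
  ext v
  simp only [mem_ker, mulVecLin_apply, fromRows_mulVec, Submodule.mem_inf, ← Sum.elim_zero_zero,
    Sum.elim_eq_iff]

lemma transpose_mul_pow_mul [DecidableEq n] (A B : Matrix n n R) (k : ℕ) :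
    ((A * B) ^ k * A)ᵀ = (Aᵀ * Bᵀ) ^ k * Aᵀ := by
  rw [transpose_mul, transpose_pow, transpose_mul, mul_pow_mul]

lemma isIdempotentElem_transpose {A : Matrix n n R} (hA : IsIdempotentElem A) :
    IsIdempotentElem Aᵀ := by
  rw [IsIdempotentElem, ← transpose_mul, hA.eq]

lemma mulVecLin_mul_pow_mul [DecidableEq n] (A B : Matrix n n R) (k : ℕ) :
    ((A * B) ^ k * A).mulVecLin = (A.mulVecLin * B.mulVecLin) ^ k * A.mulVecLin :=
  show toLinAlgEquiv' _ = (toLinAlgEquiv' A * toLinAlgEquiv' B) ^ k * toLinAlgEquiv' A by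
    rw [map_mul, map_pow, map_mul]

lemma isIdempotentElem_mulVecLin [DecidableEq n] {A : Matrix n n R} (hA : IsIdempotentElem A) :
    IsIdempotentElem A.mulVecLin :=
  hA.map toLinAlgEquiv'

lemma rank_add_finrank_ker (M : Matrix m n K) :
    M.rank + finrank K (ker M.mulVecLin) = Fintype.card n := by
  rw [rank]
  simpa using finrank_range_add_finrank_ker M.mulVecLin

lemma rank_fromCols_add_finrank_inf_s6 [Fintype m] [Fintype n₁] [Fintype n₂] (M : Matrix m n₁ K)
    (N : Matrix m n₂ K) :
    (fromCols M N).rank + finrank K ↥(range M.mulVecLin ⊓ range N.mulVecLin) = M.rank + N.rank := by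
  rw [rank, range_mulVecLin_fromCols_s6]
  exact Submodule.finrank_sup_add_finrank_inf_eq _ _

lemma rank_fromRows_add_finrank_inf [Fintype m] [Fintype l] (M : Matrix m n K) (N : Matrix l n K) :
    (fromRows M N).rank + finrank K ↥(range Mᵀ.mulVecLin ⊓ range Nᵀ.mulVecLin) =
      M.rank + N.rank := by
  rw [← rank_transpose, transpose_fromRows, rank_fromCols_add_finrank_inf_s6, rank_transpose,
    rank_transpose]

lemma rank_fromRows_add_finrank_ker_inf [Fintype m] [Fintype l] (M : Matrix m n K)
    (N : Matrix l n K) :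
    (fromRows M N).rank + finrank K ↥(ker M.mulVecLin ⊓ ker N.mulVecLin) = Fintype.card n := by
  rw [← ker_mulVecLin_fromRows_s6, rank_add_finrank_ker]

variable [DecidableEq n] {A B : Matrix n n K}

lemma rank_mul_pow_mul_sub_add_finrank_inf (hA : IsIdempotentElem A) (hB : IsIdempotentElem B)
    (k : ℕ) :
    ((A * B) ^ k * A - (B * A) ^ k * B).rank + finrank K ↥(range A.mulVecLin ⊓ range B.mulVecLin) =
      (fromRows ((A * B) ^ k * A) ((B * A) ^ k * B)).rank := by
  have hker : finrank K (ker ((A * B) ^ k * A - (B * A) ^ k * B).mulVecLin) =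
      finrank K ↥(ker ((A * B) ^ k * A).mulVecLin ⊓ ker ((B * A) ^ k * B).mulVecLin) +
        finrank K ↥(range A.mulVecLin ⊓ range B.mulVecLin) := by
    rw [← toLin'_apply', map_sub, toLin'_apply', toLin'_apply', mulVecLin_mul_pow_mul,
      mulVecLin_mul_pow_mul]
    exact Module.End.finrank_ker_mul_pow_mul_sub (isIdempotentElem_mulVecLin hA)
      (isIdempotentElem_mulVecLin hB) k
  have hnullity := rank_add_finrank_ker ((A * B) ^ k * A - (B * A) ^ k * B)
  have hrows := rank_fromRows_add_finrank_ker_inf ((A * B) ^ k * A) ((B * A) ^ k * B)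
  omega

lemma range_mulVecLin_mul_pow_mul_inf (hA : IsIdempotentElem A) (hB : IsIdempotentElem B) (k : ℕ) :
    range ((A * B) ^ k * A).mulVecLin ⊓ range ((B * A) ^ k * B).mulVecLin =
      range A.mulVecLin ⊓ range B.mulVecLin := by
  rw [mulVecLin_mul_pow_mul, mulVecLin_mul_pow_mul]
  exact Module.End.range_mul_pow_mul_inf (isIdempotentElem_mulVecLin hA)
    (isIdempotentElem_mulVecLin hB) k

end Matrix

theorem stmt_6_general (m : ℕ) (A B : Matrix (Fin m) (Fin m) ℂ)
    (hA : A * A = A) (hB : B * B = B) (k : ℕ) :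
    (((A * B) ^ k * A - (B * A) ^ k * B).rank : ℤ) =
      ((Matrix.fromRows A B).rank : ℤ) + ((Matrix.fromCols A B).rank : ℤ)
        + (((A * B) ^ k * A).rank : ℤ) + (((B * A) ^ k * B).rank : ℤ)
        - 2 * (A.rank : ℤ) - 2 * (B.rank : ℤ) := by
  have hdiff := rank_mul_pow_mul_sub_add_finrank_inf hA hB k
  have hXY := rank_fromRows_add_finrank_inf ((A * B) ^ k * A) ((B * A) ^ k * B)
  rw [transpose_mul_pow_mul, transpose_mul_pow_mul, range_mulVecLin_mul_pow_mul_inf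
    (isIdempotentElem_transpose hA) (isIdempotentElem_transpose hB)] at hXY
  have hcols := rank_fromCols_add_finrank_inf_s6 A B
  have hrows := rank_fromRows_add_finrank_inf A B
  omega

/-- For idempotent `A`, `B` and `k ≥ 1`:
`rank ((AB)^k A - (BA)^k B) = rank [A; B] + rank [A, B] + rank ((AB)^k A) + rank ((BA)^k B)
  - 2 rank A - 2 rank B`. -/
theorem stmt_6 (m : ℕ) (A B : Matrix (Fin m) (Fin m) ℂ)
    (hA : A * A = A) (hB : B * B = B) (k : ℕ) (hk : 1 ≤ k) :
    (((A * B) ^ k * A - (B * A) ^ k * B).rank : ℤ) =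
      ((Matrix.fromRows A B).rank : ℤ) + ((Matrix.fromCols A B).rank : ℤ)
        + (((A * B) ^ k * A).rank : ℤ) + (((B * A) ^ k * B).rank : ℤ)
        - 2 * (A.rank : ℤ) - 2 * (B.rank : ℤ) :=
  stmt_6_general m A B hA hB k
end
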